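/- arXiv:quant-ph/0206185 — 2 statements merged into one kernel-verified Lean document; each statement's English description precedes it below -/
import Mathlib

section
/- For a density operator ρ, a positive semidefinite operator σ, and real numbers a < b, the differences of error probabilities satisfy e^{a}(β(a) − β(b)) ≤ α(b) − α(a) ≤ e^{b}(β(a) − β(b)), where α(x) = 1 − Tr(ρ S(x)), β(x) = Tr(σ S(x)), and S(x) is the projection onto the positive spectral subspace of ρ − e^{x}σ. -/
/-!
Neyman–Pearson: for Hermitian `A`, the positive spectral projection `P = posProj A` maximises
`Re Tr (A B)` over `0 ≤ B ≤ 1`, since `Tr (A P) - Tr (A B) = Tr ((A P - A) B) + Tr (A P (1 - B))`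
and `A P - A`, `A P` are positive functions of `A`. Comparing `S(a)` with `S(b)` this way, once
for `A = ρ - e^a σ` and once for `A = ρ - e^b σ`, gives the two inequalities.
-/

open scoped ComplexOrder

/-- The spectral projection of a matrix onto the direct sum of its eigenspaces
corresponding to strictly positive eigenvalues (defined to be `0` if the matrix
is not Hermitian). -/
noncomputable def posProj {m : Type*} [Fintype m] [DecidableEq m]
    (A : Matrix m m ℂ) : Matrix m m ℂ :=
  if hA : A.IsHermitian then
    (hA.eigenvectorUnitary : Matrix m m ℂ) *
      Matrix.diagonal (fun i => if 0 < hA.eigenvalues i then (1 : ℂ) else 0) *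
      star (hA.eigenvectorUnitary : Matrix m m ℂ)
  else 0

open scoped MatrixOrder

namespace Matrix

theorem IsHermitian.sub_ofReal_smul {n : Type*} {ρ σ : Matrix n n ℂ} (hρ : ρ.IsHermitian)
    (hσ : σ.IsHermitian) (c : ℝ) : (ρ - (c : ℂ) • σ).IsHermitian :=
  hρ.sub (hσ.smul (Complex.conj_ofReal c))

variable {n : Type*} [Fintype n]

theorem PosSemidef.trace_mul_nonneg {𝕜 : Type*} [RCLike 𝕜] {A B : Matrix n n 𝕜}
    (hA : A.PosSemidef) (hB : B.PosSemidef) : 0 ≤ (A * B).trace := by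
  classical
  obtain ⟨X, rfl⟩ := CStarAlgebra.nonneg_iff_eq_star_mul_self.mp hA.nonneg
  rw [Matrix.mul_assoc, trace_mul_comm, star_eq_conjTranspose]
  exact (hB.mul_mul_conjTranspose_same X).trace_nonneg

variable [DecidableEq n] {A B : Matrix n n ℂ}

theorem IsHermitian.posProj_eq_cfc (hA : A.IsHermitian) :
    posProj A = cfc (fun x : ℝ => if 0 < x then (1 : ℝ) else 0) A := by
  rw [posProj, dif_pos hA, hA.cfc_eq, IsHermitian.cfc, Unitary.conjStarAlgAut_apply]
  congr 3
  funext i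
  simp only [Function.comp_apply]
  split_ifs <;> simp

theorem continuousOn_real_spectrum {𝕜 : Type*} [RCLike 𝕜] (A : Matrix n n 𝕜) (f : ℝ → ℝ) :
    ContinuousOn f (spectrum ℝ A) :=
  A.finite_real_spectrum.continuousOn f

theorem IsHermitian.posSemidef_posProj (hA : A.IsHermitian) : (posProj A).PosSemidef := by
  rw [hA.posProj_eq_cfc, ← nonneg_iff_posSemidef]
  exact cfc_nonneg fun x _ => by split_ifs <;> norm_num

theorem IsHermitian.posSemidef_one_sub_posProj (hA : A.IsHermitian) :
    (1 - posProj A).PosSemidef := by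
  rw [hA.posProj_eq_cfc, ← nonneg_iff_posSemidef, sub_nonneg]
  exact cfc_le_one _ _ fun x _ => by split_ifs <;> norm_num

theorem IsHermitian.posSemidef_mul_posProj (hA : A.IsHermitian) : (A * posProj A).PosSemidef := by
  rw [hA.posProj_eq_cfc, ← nonneg_iff_posSemidef]
  nth_rw 1 [← cfc_id' ℝ A]
  rw [← cfc_mul _ _ A (continuousOn_real_spectrum A _) (continuousOn_real_spectrum A _)]
  exact cfc_nonneg fun x _ => by split_ifs <;> linarith

theorem IsHermitian.posSemidef_mul_posProj_sub_self (hA : A.IsHermitian) :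
    (A * posProj A - A).PosSemidef := by
  rw [hA.posProj_eq_cfc, ← nonneg_iff_posSemidef]
  nth_rw 1 [← cfc_id' ℝ A]
  nth_rw 3 [← cfc_id' ℝ A]
  rw [← cfc_mul _ _ A (continuousOn_real_spectrum A _) (continuousOn_real_spectrum A _),
    ← cfc_sub _ _ A (continuousOn_real_spectrum A _) (continuousOn_real_spectrum A _)]
  exact cfc_nonneg fun x _ => by split_ifs <;> linarith

theorem IsHermitian.trace_mul_le_trace_mul_posProj (hA : A.IsHermitian) (hB : B.PosSemidef)
    (hB₁ : (1 - B).PosSemidef) : (A * B).trace ≤ (A * posProj A).trace := by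
  have hsplit : (A * posProj A).trace - (A * B).trace =
      ((A * posProj A - A) * B).trace + (A * posProj A * (1 - B)).trace := by
    simp only [Matrix.sub_mul, Matrix.mul_sub, Matrix.mul_one, trace_sub]
    ring
  rw [← sub_nonneg, hsplit]
  exact add_nonneg (hA.posSemidef_mul_posProj_sub_self.trace_mul_nonneg hB)
    (hA.posSemidef_mul_posProj.trace_mul_nonneg hB₁)

end Matrix

open Matrix

theorem re_trace_sub_mul_le_re_trace_sub_mul_posProj {n : Type*} [Fintype n] [DecidableEq n]
    {ρ σ B : Matrix n n ℂ} (hρ : ρ.IsHermitian) (hσ : σ.IsHermitian) (c : ℝ)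
    (hB : B.PosSemidef) (hB₁ : (1 - B).PosSemidef) :
    (ρ * B).trace.re - c * (σ * B).trace.re ≤
      (ρ * posProj (ρ - (c : ℂ) • σ)).trace.re - c * (σ * posProj (ρ - (c : ℂ) • σ)).trace.re := by
  have := Complex.le_def.mp ((hρ.sub_ofReal_smul hσ c).trace_mul_le_trace_mul_posProj hB hB₁) |>.1
  simpa only [Matrix.sub_mul, Matrix.smul_mul, trace_sub, trace_smul, Complex.sub_re,
    smul_eq_mul, Complex.re_ofReal_mul] using this

theorem likelihood_error_difference_bounds_general {m : Type*} [Fintype m] [DecidableEq m]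
    (ρ σ : Matrix m m ℂ) (hρ : ρ.PosSemidef)
    (hσ : σ.PosSemidef) (a b : ℝ) :
    Real.exp a * ((σ * posProj (ρ - (Real.exp a : ℂ) • σ)).trace.re -
          (σ * posProj (ρ - (Real.exp b : ℂ) • σ)).trace.re) ≤
        (1 - (ρ * posProj (ρ - (Real.exp b : ℂ) • σ)).trace.re) -
          (1 - (ρ * posProj (ρ - (Real.exp a : ℂ) • σ)).trace.re) ∧
      (1 - (ρ * posProj (ρ - (Real.exp b : ℂ) • σ)).trace.re) -
          (1 - (ρ * posProj (ρ - (Real.exp a : ℂ) • σ)).trace.re) ≤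
        Real.exp b * ((σ * posProj (ρ - (Real.exp a : ℂ) • σ)).trace.re -
          (σ * posProj (ρ - (Real.exp b : ℂ) • σ)).trace.re) := by
  have hS : ∀ x : ℝ, (ρ - (Real.exp x : ℂ) • σ).IsHermitian :=
    fun x => hρ.isHermitian.sub_ofReal_smul hσ.isHermitian (Real.exp x)
  have hopt_a := re_trace_sub_mul_le_re_trace_sub_mul_posProj hρ.isHermitian hσ.isHermitian
    (Real.exp a) (hS b).posSemidef_posProj (hS b).posSemidef_one_sub_posProj
  have hopt_b := re_trace_sub_mul_le_re_trace_sub_mul_posProj hρ.isHermitian hσ.isHermitian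
    (Real.exp b) (hS a).posSemidef_posProj (hS a).posSemidef_one_sub_posProj
  constructor <;> linarith

/-- For `a < b`:
`e^a (β(a) − β(b)) ≤ α(b) − α(a) ≤ e^b (β(a) − β(b))`, where
`α(x) = 1 − Tr(ρ S(x))`, `β(x) = Tr(σ S(x))`, `S(x) = {ρ − e^x σ > 0}`. -/
theorem likelihood_error_difference_bounds {m : Type*} [Fintype m] [DecidableEq m]
    (ρ σ : Matrix m m ℂ) (hρ : ρ.PosSemidef) (hρ1 : ρ.trace = 1)
    (hσ : σ.PosSemidef) (a b : ℝ) (hab : a < b) :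
    Real.exp a * ((σ * posProj (ρ - (Real.exp a : ℂ) • σ)).trace.re -
          (σ * posProj (ρ - (Real.exp b : ℂ) • σ)).trace.re) ≤
        (1 - (ρ * posProj (ρ - (Real.exp b : ℂ) • σ)).trace.re) -
          (1 - (ρ * posProj (ρ - (Real.exp a : ℂ) • σ)).trace.re) ∧
      (1 - (ρ * posProj (ρ - (Real.exp b : ℂ) • σ)).trace.re) -
          (1 - (ρ * posProj (ρ - (Real.exp a : ℂ) • σ)).trace.re) ≤
        Real.exp b * ((σ * posProj (ρ - (Real.exp a : ℂ) • σ)).trace.re -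
          (σ * posProj (ρ - (Real.exp b : ℂ) • σ)).trace.re) :=
  likelihood_error_difference_bounds_general ρ σ hρ hσ a b
end

section
/- Lower bound lemma for correct-testing exponent: suppose for all n and all tests the inequality Tr((ρ_n − e^{na}σ_n)(I − S_n(a))) ≤ Tr((ρ_n − e^{na}σ_n)(I − T_n)) holds, i.e. α_n(a) − e^{na}β_n^c(a) ≤ α_n[T_n] − e^{na}β_n^c[T_n], where β_n^c[T] = σ_n[I − T]. Then for any real a and any test sequence T, limsup −(1/n) log β_n^c[T_n] ≥ min( limsup −(1/n) log β_n^c(a), a + liminf −(1/n) log α_n[T_n] ). -/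
/-!
Multiplying the hypothesis by `e^{-na}` and dropping `e^{-na} αₙ(a) ≥ 0` gives
`βₙᶜ[Tₙ] ≤ βₙᶜ(a) + e^{-na} αₙ[Tₙ]`. The exponent of a sum is at least the smaller of the
two exponents, taken along a subsequence for the first summand and eventually for the second,
and the factor `e^{-na}` shifts the exponent of `αₙ[Tₙ]` by `a`.
-/

open Filter

/-- The liminf exponential rate `liminf -(1/n) log p n`, with the convention
that the exponent is `+∞` when `p n = 0` (i.e. `log 0 = -∞`). -/
noncomputable def liminfExpRate (p : ℕ → ℝ) : EReal :=
  Filter.liminf (fun n => if p n = 0 then (⊤ : EReal)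
    else ((-(1 / (n : ℝ)) * Real.log (p n) : ℝ) : EReal)) Filter.atTop

/-- The limsup exponential rate `limsup -(1/n) log p n`, with the convention
that the exponent is `+∞` when `p n = 0`. -/
noncomputable def limsupExpRate (p : ℕ → ℝ) : EReal :=
  Filter.limsup (fun n => if p n = 0 then (⊤ : EReal)
    else ((-(1 / (n : ℝ)) * Real.log (p n) : ℝ) : EReal)) Filter.atTop

open Real

noncomputable def expRateTerm (n : ℕ) (p : ℝ) : EReal :=
  if p = 0 then ⊤ else ((-(1 / (n : ℝ)) * Real.log p : ℝ) : EReal)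

lemma limsupExpRate_eq (p : ℕ → ℝ) :
    limsupExpRate p = limsup (fun n => expRateTerm n (p n)) atTop := rfl

lemma liminfExpRate_eq (p : ℕ → ℝ) :
    liminfExpRate p = liminf (fun n => expRateTerm n (p n)) atTop := rfl

section expRateTerm

variable {n : ℕ} {p q c : ℝ}

lemma expRateTerm_anti (hp : 0 ≤ p) (hpq : p ≤ q) : expRateTerm n q ≤ expRateTerm n p := by
  rcases hp.eq_or_lt with rfl | hp
  · simp [expRateTerm]
  · rw [expRateTerm, expRateTerm, if_neg hp.ne', if_neg (hp.trans_le hpq).ne',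
      EReal.coe_le_coe_iff]
    have hn : 0 ≤ 1 / (n : ℝ) := by positivity
    nlinarith [Real.log_le_log hp hpq]

lemma lt_exp_of_coe_lt_expRateTerm (hn : 0 < n) (h : (c : EReal) < expRateTerm n p) :
    p < exp (-(n * c)) := by
  rcases le_or_gt p 0 with hp | hp
  · exact hp.trans_lt (exp_pos _)
  rw [expRateTerm, if_neg hp.ne', EReal.coe_lt_coe_iff] at h
  rw [← Real.log_lt_iff_lt_exp hp]
  have hn : (0 : ℝ) < n := by exact_mod_cast hn
  have hmul := mul_lt_mul_of_pos_left h hn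
  field_simp at hmul
  linarith

lemma coe_lt_expRateTerm_of_lt_exp (hn : 0 < n) (hp : 0 ≤ p) (h : p < exp (-(n * c))) :
    (c : EReal) < expRateTerm n p := by
  rcases hp.eq_or_lt with rfl | hp
  · simp [expRateTerm]
  rw [expRateTerm, if_neg hp.ne', EReal.coe_lt_coe_iff]
  rw [← Real.log_lt_iff_lt_exp hp] at h
  have hn : (0 : ℝ) < n := by exact_mod_cast hn
  rw [neg_mul, one_div_mul_eq_div, lt_neg, div_lt_iff₀ hn]
  linarith

lemma expRateTerm_exp_mul (hn : 0 < n) (a p : ℝ) :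
    expRateTerm n (exp (-(n * a)) * p) = a + expRateTerm n p := by
  by_cases hp : p = 0
  · simp [expRateTerm, hp]
  rw [expRateTerm, expRateTerm, if_neg (mul_ne_zero (exp_pos _).ne' hp), if_neg hp,
    Real.log_mul (exp_pos _).ne' hp, Real.log_exp, ← EReal.coe_add]
  have hn : (n : ℝ) ≠ 0 := by exact_mod_cast hn.ne'
  congr 1
  field_simp
  ring

end expRateTerm

lemma limsupExpRate_anti {p q : ℕ → ℝ} (hp : ∀ n, 0 ≤ p n) (hpq : ∀ n, p n ≤ q n) :
    limsupExpRate q ≤ limsupExpRate p := by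
  rw [limsupExpRate_eq, limsupExpRate_eq]
  exact limsup_le_limsup (Eventually.of_forall fun n => expRateTerm_anti (hp n) (hpq n))

lemma coe_add_liminfExpRate_le (a : ℝ) (p : ℕ → ℝ) :
    a + liminfExpRate p ≤ liminfExpRate fun n => exp (-(n * a)) * p n := by
  have hshift : (fun n => expRateTerm n (exp (-(n * a)) * p n)) =ᶠ[atTop]
      fun n => (a : EReal) + expRateTerm n (p n) :=
    (eventually_gt_atTop 0).mono fun n hn => expRateTerm_exp_mul hn a (p n)
  rw [liminfExpRate_eq, liminfExpRate_eq, liminf_congr hshift]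
  have h := EReal.le_liminf_add (f := atTop) (u := fun _ => (a : EReal))
    (v := fun n => expRateTerm n (p n))
  rwa [liminf_const] at h

lemma eventually_two_mul_exp_le {c' c : ℝ} (h : c' < c) :
    ∀ᶠ n : ℕ in atTop, 2 * exp (-(n * c)) ≤ exp (-(n * c')) := by
  have hgrow : Tendsto (fun n : ℕ => exp (n * (c - c'))) atTop atTop :=
    tendsto_exp_atTop.comp (tendsto_natCast_atTop_atTop.atTop_mul_const (sub_pos.2 h))
  filter_upwards [hgrow.eventually_ge_atTop 2] with n hn
  calc 2 * exp (-(n * c)) ≤ exp (n * (c - c')) * exp (-(n * c)) := by gcongr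
    _ = exp (-(n * c')) := by rw [← exp_add]; ring_nf

lemma min_limsupExpRate_liminfExpRate_le {x y : ℕ → ℝ} (hxy : ∀ n, 0 ≤ x n + y n) :
    min (limsupExpRate x) (liminfExpRate y) ≤ limsupExpRate (x + y) := by
  refine le_of_forall_lt_imp_le_of_dense fun d hd => ?_
  obtain ⟨c', hdc', hc'⟩ := EReal.exists_between_coe_real hd
  obtain ⟨c, hc'c, hc⟩ := EReal.exists_between_coe_real hc'
  rw [lt_min_iff] at hc
  have hx : ∃ᶠ n in atTop, x n < exp (-(n * c)) :=
    ((frequently_lt_of_lt_limsup (by isBoundedDefault) hc.1).and_eventually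
      (eventually_gt_atTop 0)).mono fun n h => lt_exp_of_coe_lt_expRateTerm h.2 h.1
  have hy : ∀ᶠ n in atTop, y n < exp (-(n * c)) :=
    ((eventually_lt_of_lt_liminf hc.2).and (eventually_gt_atTop 0)).mono
      fun n h => lt_exp_of_coe_lt_expRateTerm h.2 h.1
  have hsum : ∃ᶠ n in atTop, (c' : EReal) ≤ expRateTerm n (x n + y n) := by
    have htwo := eventually_two_mul_exp_le (EReal.coe_lt_coe_iff.1 hc'c)
    refine (hx.and_eventually (hy.and (htwo.and (eventually_gt_atTop 0)))).mono ?_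
    rintro n ⟨hxn, hyn, htwo, hn⟩
    exact (coe_lt_expRateTerm_of_lt_exp hn (hxy n) (by linarith)).le
  exact hdc'.le.trans (le_limsup_of_frequently_le hsum (by isBoundedDefault))

lemma le_add_exp_neg_mul_of_sub_exp_mul_le {α β α' β' s : ℝ} (hα : 0 ≤ α)
    (h : α - exp s * β ≤ α' - exp s * β') : β' ≤ β + exp (-s) * α' := by
  have h' := mul_le_mul_of_nonneg_left h (exp_pos (-s)).le
  rw [mul_sub, mul_sub, ← mul_assoc, ← mul_assoc, ← exp_add, neg_add_cancel, exp_zero,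
    one_mul, one_mul] at h'
  nlinarith [mul_nonneg (exp_pos (-s)).le hα]

theorem correct_exponent_lower_bound_general (a : ℝ) (αa βca αT βcT : ℕ → ℝ)
    (h1 : ∀ n, 0 ≤ αa n)
    (h4 : ∀ n, 0 ≤ βcT n)
    (hNP : ∀ n : ℕ,
      αa n - Real.exp (n * a) * βca n ≤ αT n - Real.exp (n * a) * βcT n) :
    min (limsupExpRate βca) ((a : EReal) + liminfExpRate αT) ≤ limsupExpRate βcT := by
  have hβ : ∀ n, βcT n ≤ βca n + exp (-(n * a)) * αT n :=
    fun n => le_add_exp_neg_mul_of_sub_exp_mul_le (h1 n) (hNP n)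
  calc min (limsupExpRate βca) ((a : EReal) + liminfExpRate αT)
      ≤ min (limsupExpRate βca) (liminfExpRate fun n => exp (-(n * a)) * αT n) :=
        min_le_min_left _ (coe_add_liminfExpRate_le a αT)
    _ ≤ limsupExpRate (βca + fun n : ℕ => exp (-(n * a)) * αT n) :=
        min_limsupExpRate_liminfExpRate_le fun n => (h4 n).trans (hβ n)
    _ ≤ limsupExpRate βcT := limsupExpRate_anti h4 hβ

/-- Lower bound lemma for the correct-testing exponent: if
`αₙ(a) - e^{na} βₙᶜ(a) ≤ αₙ[Tₙ] - e^{na} βₙᶜ[Tₙ]` for all `n`, then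
`limsup -(1/n) log βₙᶜ[Tₙ] ≥ min (limsup -(1/n) log βₙᶜ(a), a + liminf -(1/n) log αₙ[Tₙ])`. -/
theorem correct_exponent_lower_bound (a : ℝ) (αa βca αT βcT : ℕ → ℝ)
    (h1 : ∀ n, 0 ≤ αa n) (h2 : ∀ n, 0 ≤ βca n)
    (h3 : ∀ n, 0 ≤ αT n) (h4 : ∀ n, 0 ≤ βcT n)
    (hNP : ∀ n : ℕ,
      αa n - Real.exp (n * a) * βca n ≤ αT n - Real.exp (n * a) * βcT n) :
    min (limsupExpRate βca) ((a : EReal) + liminfExpRate αT) ≤ limsupExpRate βcT :=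
  correct_exponent_lower_bound_general a αa βca αT βcT h1 h4 hNP
end
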